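/- arXiv:2304.06318 — 2 statements merged into one kernel-verified Lean document; each statement's English description precedes it below -/
import Mathlib

section
/- Let G be a finite connected graph with set of blocks 𝓑. Then the connected blocks polytope CBP(G) ⊆ ℝ^𝓑 has dimension |𝓑|; in particular, CBP(G) is full-dimensional. -/
open Set

noncomputable section

namespace ConnectedBlocksPaper

variable {V : Type} [Fintype V] [DecidableEq V]

/-- A subgraph is 2-connected: at least 3 vertices and removing any vertex keeps it connected. -/
def IsTwoConnectedSub (G : SimpleGraph V) (H : G.Subgraph) : Prop :=
  3 ≤ H.verts.ncard ∧ ∀ v ∈ H.verts, (H.deleteVerts {v}).Connected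

/-- A block of `G`: a maximal 2-connected subgraph, or a bridge together with its two
incident vertices. -/
def IsBlock (G : SimpleGraph V) (B : G.Subgraph) : Prop :=
  (IsTwoConnectedSub G B ∧ ∀ B' : G.Subgraph, IsTwoConnectedSub G B' → B ≤ B' → B' = B)
  ∨ (∃ (u v : V) (h : G.Adj u v), G.IsBridge s(u, v) ∧ B = G.subgraphOfAdj h)

/-- The set `𝓑` of blocks of `G`, as a type. -/
abbrev Block (G : SimpleGraph V) := {B : G.Subgraph // IsBlock G B}

/-- The subgraph `G[𝓐]` induced by a set of blocks. -/
def blockUnion (G : SimpleGraph V) (𝓐 : Set (Block G)) : G.Subgraph :=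
  ⨆ B ∈ 𝓐, (B : G.Subgraph)

/-- `G[𝓐]` is connected (the empty set of blocks counts as connected). -/
def ConnBlocks (G : SimpleGraph V) (𝓐 : Set (Block G)) : Prop :=
  𝓐 = ∅ ∨ (blockUnion G 𝓐).Connected

/-- The incidence vector `χ^𝓐 ∈ {0,1}^𝓑` of a set of blocks `𝓐 ⊆ 𝓑`. -/
def incVec (G : SimpleGraph V) (𝓐 : Set (Block G)) : Block G → ℝ :=
  Set.indicator 𝓐 1

/-- The connected blocks polytope `CBP(G) ⊆ ℝ^𝓑`. -/
def CBP (G : SimpleGraph V) : Set (Block G → ℝ) :=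
  convexHull ℝ {x | ∃ 𝓐 : Set (Block G), ConnBlocks G 𝓐 ∧ x = incVec G 𝓐}

/-- `F` is a face of the convex set `P`. -/
def IsFaceOf {E : Type*} [AddCommGroup E] [Module ℝ E] (P F : Set E) : Prop :=
  F ⊆ P ∧ Convex ℝ F ∧
    ∀ x ∈ P, ∀ y ∈ P, ∀ t : ℝ, 0 < t → t < 1 →
      t • x + (1 - t) • y ∈ F → x ∈ F ∧ y ∈ F

/-- The dimension of a polytope: the dimension of its affine hull. -/
def polyDim {E : Type*} [AddCommGroup E] [Module ℝ E] (P : Set E) : ℕ :=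
  Module.finrank ℝ (affineSpan ℝ P).direction

/-- A facet is a face of dimension `dim P - 1`. -/
def IsFacetOf {E : Type*} [AddCommGroup E] [Module ℝ E] (P F : Set E) : Prop :=
  IsFaceOf P F ∧ polyDim F = polyDim P - 1

/-- `v` is a cut vertex of `G`: deleting `v` from the connected graph `G` leaves more than
one component. -/
def IsCutVertex (G : SimpleGraph V) (v : V) : Prop :=
  ¬ (G.induce ({v}ᶜ : Set V)).Preconnected

/-- `𝓑⟨𝓐⟩`: the smallest set of blocks inducing a connected subgraph and containing `𝓐`. -/
def blockClosure (G : SimpleGraph V) (𝓐 : Set (Block G)) : Set (Block G) :=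
  ⋂₀ {𝓒 : Set (Block G) | 𝓐 ⊆ 𝓒 ∧ ConnBlocks G 𝓒}

/-- An independent set of blocks: no two blocks share a common vertex. -/
def IndepBlocks (G : SimpleGraph V) (𝓘 : Set (Block G)) : Prop :=
  ∀ B₁ ∈ 𝓘, ∀ B₂ ∈ 𝓘, B₁ ≠ B₂ →
    ((B₁ : G.Subgraph).verts ∩ (B₂ : G.Subgraph).verts) = ∅

/-- `(𝓘, α)` is an independent blocks inequality. -/
def IsIBI (G : SimpleGraph V) (𝓘 : Set (Block G)) (α : Block G → ℤ) : Prop :=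
  IndepBlocks G 𝓘 ∧
  (∀ B, B ∉ blockClosure G 𝓘 → α B = 0) ∧
  (∀ B ∈ 𝓘, α B = 1) ∧
  (∀ B ∈ blockClosure G 𝓘 \ 𝓘, α B ≤ 0) ∧
  (∑ᶠ B ∈ blockClosure G 𝓘 \ 𝓘, α B = -((𝓘.ncard : ℤ) - 1)) ∧
  (∀ I ⊆ 𝓘, ∑ᶠ B ∈ blockClosure G I \ 𝓘, α B ≤ -((I.ncard : ℤ) - 1))

/-- `𝓑[H]`: the set of blocks (of `G`) of the subgraph `H`. -/
def blocksOf (G : SimpleGraph V) (H : G.Subgraph) : Set (Block G) :=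
  {B : Block G | (B : G.Subgraph) ≤ H}

/-- `𝒦_v`: the components of `G - v` with `v` (and its incident edges) added back. -/
def Kv (G : SimpleGraph V) (v : V) : Set G.Subgraph :=
  {H | ∃ C : (G.induce ({v}ᶜ : Set V)).ConnectedComponent,
        H = (⊤ : G.Subgraph).induce (Subtype.val '' C.supp ∪ {v})}

/-- A polytope is simple if every vertex lies in exactly `dim P` facets. -/
def IsSimplePolytope {E : Type*} [AddCommGroup E] [Module ℝ E] (P : Set E) : Prop :=
  ∀ x ∈ P.extremePoints ℝ, {F : Set E | IsFacetOf P F ∧ x ∈ F}.ncard = polyDim P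

/-- A simplex: the convex hull of an affinely independent finite set. -/
def IsSimplex {E : Type*} [AddCommGroup E] [Module ℝ E] (F : Set E) : Prop :=
  ∃ s : Finset E, AffineIndependent ℝ ((↑) : s → E) ∧ F = convexHull ℝ (s : Set E)

/-- A polytope is simplicial if every facet is a simplex. -/
def IsSimplicialPolytope {E : Type*} [AddCommGroup E] [Module ℝ E] (P : Set E) : Prop :=
  ∀ F : Set E, IsFacetOf P F → IsSimplex F

/-- The graph of a polytope: extreme points, adjacent when they span a 1-dimensional face. -/
def polyGraph {E : Type*} [AddCommGroup E] [Module ℝ E] (P : Set E) : SimpleGraph E where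
  Adj x y := x ≠ y ∧ x ∈ P.extremePoints ℝ ∧ y ∈ P.extremePoints ℝ ∧
    IsFaceOf P (segment ℝ x y) ∧ polyDim (segment ℝ x y) = 1
  symm := by
    constructor
    rintro x y ⟨hxy, hx, hy, hF, hd⟩
    exact ⟨hxy.symm, hy, hx, by rwa [segment_symm], by rwa [segment_symm]⟩
  loopless := by constructor; rintro x ⟨h, -⟩; exact h rfl

end ConnectedBlocksPaper

namespace ConnectedBlocksPaper

open SimpleGraph

section

variable {k ι : Type*} [Ring k] [Finite ι] [DecidableEq ι]

theorem vectorSpan_eq_top_of_zero_mem_of_single_mem {s : Set (ι → k)} (h0 : 0 ∈ s)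
    (hs : ∀ i, Pi.single i 1 ∈ s) : vectorSpan k s = ⊤ := by
  rw [eq_top_iff, ← (Pi.basisFun k ι).span_eq, Submodule.span_le]
  rintro _ ⟨i, rfl⟩
  simpa [Pi.basisFun_apply] using vsub_mem_vectorSpan k (hs i) h0

theorem polyDim_eq_card_of_zero_mem_of_single_mem {s : Set (ι → ℝ)} (h0 : 0 ∈ s)
    (hs : ∀ i, Pi.single i 1 ∈ s) : polyDim s = Nat.card ι := by
  cases nonempty_fintype ι
  rw [polyDim, direction_affineSpan, vectorSpan_eq_top_of_zero_mem_of_single_mem h0 hs,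
    finrank_top, Module.finrank_fintype_fun_eq_card, Nat.card_eq_fintype_card]

end

section

variable {V : Type} {G : SimpleGraph V}

theorem IsTwoConnectedSub.connected {H : G.Subgraph} (h : IsTwoConnectedSub G H) :
    H.Connected := by
  obtain ⟨hcard, hdel⟩ := h
  refine Subgraph.connected_iff.2 ⟨?_, Set.nonempty_of_ncard_ne_zero (by omega)⟩
  rw [Subgraph.preconnected_iff_forall_exists_walk_subgraph]
  intro a b ha hb
  -- `a` and `b` are already joined in `H - c` for any third vertex `c` of `H`.
  have hpair : ({a, b} : Set V).ncard < H.verts.ncard :=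
    ((Set.ncard_insert_le a {b}).trans_eq (by rw [Set.ncard_singleton])).trans_lt (by omega)
  obtain ⟨c, hc, hcab⟩ := Set.exists_mem_notMem_of_ncard_lt_ncard hpair
  simp only [Set.mem_insert_iff, Set.mem_singleton_iff, not_or] at hcab
  obtain ⟨p, hp⟩ := (Subgraph.preconnected_iff_forall_exists_walk_subgraph _).1
    (hdel c hc).preconnected (u := a) (v := b) ⟨ha, Ne.symm hcab.1⟩ ⟨hb, Ne.symm hcab.2⟩
  exact ⟨p, hp.trans Subgraph.deleteVerts_le⟩

theorem IsBlock.connected {B : G.Subgraph} (h : IsBlock G B) : B.Connected := by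
  obtain h2c | ⟨u, v, huv, -, rfl⟩ := h
  · exact h2c.1.connected
  · exact Subgraph.subgraphOfAdj_connected huv

theorem connBlocks_singleton (B : Block G) : ConnBlocks G {B} := by
  refine Or.inr ?_
  simpa [blockUnion] using B.2.connected

theorem incVec_empty : incVec G ∅ = 0 :=
  Set.indicator_empty 1

theorem incVec_singleton [DecidableEq (Block G)] (B : Block G) :
    incVec G {B} = Pi.single B 1 := by
  ext B'
  by_cases h : B' = B <;> simp [incVec, h]

theorem incVec_mem_CBP {𝓐 : Set (Block G)} (h : ConnBlocks G 𝓐) : incVec G 𝓐 ∈ CBP G :=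
  subset_convexHull ℝ _ ⟨𝓐, h, rfl⟩

end

variable {V : Type} [Fintype V] [DecidableEq V]

theorem cbp_dimension_general (G : SimpleGraph V) :
    polyDim (CBP G) = Nat.card (Block G) := by
  classical
  refine polyDim_eq_card_of_zero_mem_of_single_mem ?_ fun B => ?_
  · rw [← incVec_empty]
    exact incVec_mem_CBP (Or.inl rfl)
  · rw [← incVec_singleton]
    exact incVec_mem_CBP (connBlocks_singleton B)

/-- `CBP(G)` has dimension `|𝓑|`; in particular it is full-dimensional. -/
theorem cbp_dimension (G : SimpleGraph V) (hG : G.Connected) :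
    polyDim (CBP G) = Nat.card (Block G) :=
  cbp_dimension_general G

end ConnectedBlocksPaper
end
end

section
/- Let G be a finite connected graph with set of blocks 𝓑. Every independent blocks inequality (𝓘, α) defines a facet of CBP(G); that is, {x ∈ CBP(G) : ∑_{B∈𝓑} α_B x_B = 1} is a face of CBP(G) of dimension |𝓑| − 1. -/
/-!
Every connected set of blocks `𝓐` satisfies `∑_{B ∈ 𝓐} α_B ≤ 1`: with `I = 𝓐 ∩ 𝓘`, the set
`𝓑⟨I⟩ ∖ 𝓘` lies inside `𝓐`, and `α` is nonpositive off `𝓘`, so the sum is at most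
`|I| - (|I| - 1)`. So the inequality is valid on `CBP(G)`, its tight points form a face, and
that face lies in a hyperplane, which bounds its dimension by `|𝓑| - 1`.

For the lower bound, `𝓑` itself is tight. If a tight connected `T` meets a set `R` of blocks
in two blocks `z ≠ a`, let `C` be the component of `a` in `T - z`. The integer weights of `C`
and `T ∖ C` add up to `1`, so one of them is `≥ 1`, hence tight, and it meets `R` in fewer
blocks. Iterating gives, for every nonempty `R`, a tight connected set meeting `R` in exactly
one block `v`; its incidence vector is `e_v` plus unit vectors outside `R`. Peeling `R = 𝓑`
one block at a time puts every `e_v` in the linear span of the tight points, and since these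
lie on a hyperplane avoiding `0`, their affine hull has dimension `|𝓑| - 1`.
-/

open Set

noncomputable section

namespace ConnectedBlocksPaper

variable {V : Type} [Fintype V] [DecidableEq V]

section Polytope

variable {E : Type*} [AddCommGroup E] [Module ℝ E]

theorem isFaceOf_setOf_eq_one {P : Set E} (hP : Convex ℝ P) (f : E →ₗ[ℝ] ℝ)
    (hf : ∀ x ∈ P, f x ≤ 1) : IsFaceOf P {x ∈ P | f x = 1} := by
  refine ⟨sep_subset _ _, hP.inter (convex_hyperplane f.isLinear 1), ?_⟩
  rintro x hx y hy t ht₀ ht₁ ⟨-, hxy⟩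
  rw [map_add, map_smul, map_smul, smul_eq_mul, smul_eq_mul] at hxy
  have := hf x hx
  have := hf y hy
  exact ⟨⟨hx, by nlinarith⟩, ⟨hy, by nlinarith⟩⟩

theorem polyDim_eq_finrank_sub_one [FiniteDimensional ℝ E] {F : Set E} (f : E →ₗ[ℝ] ℝ)
    (hF : ∀ x ∈ F, f x = 1) (hspan : Submodule.span ℝ F = ⊤) :
    polyDim F = Module.finrank ℝ E - 1 := by
  have hspan₀ : vectorSpan ℝ (insert 0 F) = ⊤ := by
    rw [vectorSpan_eq_span_vsub_set_right ℝ (mem_insert 0 F)]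
    simpa using hspan
  have hge : Module.finrank ℝ E ≤ polyDim F + 1 :=
    calc Module.finrank ℝ E = Module.finrank ℝ (vectorSpan ℝ (insert 0 F)) := by
          rw [hspan₀, finrank_top]
      _ ≤ polyDim F + 1 := by
          rw [polyDim, direction_affineSpan]
          exact finrank_vectorSpan_insert_le_set ℝ F 0
  rcases F.eq_empty_or_nonempty with rfl | ⟨x, hx⟩
  · rw [polyDim, AffineSubspace.span_empty, AffineSubspace.direction_bot, finrank_bot] at hge ⊢
    omega
  have hdir : (affineSpan ℝ F).direction ≤ LinearMap.ker f := by
    rw [direction_affineSpan, vectorSpan_def, Submodule.span_le]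
    rintro _ ⟨a, ha, b, hb, rfl⟩
    simp [hF a ha, hF b hb]
  have hker : LinearMap.ker f < ⊤ := by
    refine lt_top_iff_ne_top.2 fun h => ?_
    simpa [LinearMap.ker_eq_top.1 h] using hF x hx
  have hlt : polyDim F < Module.finrank ℝ E :=
    (Submodule.finrank_mono hdir).trans_lt (Submodule.finrank_lt hker.ne)
  omega

end Polytope

section ConnectedFinset

variable {β : Type*}

def ReachableIn (r : β → β → Prop) (S : Finset β) : β → β → Prop :=
  Relation.ReflTransGen fun x y => x ∈ S ∧ y ∈ S ∧ r x y

def ConnectedIn (r : β → β → Prop) (S : Finset β) : Prop :=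
  ∀ x ∈ S, ∀ y ∈ S, ReachableIn r S x y

open Classical in
def componentIn (r : β → β → Prop) (S : Finset β) (a : β) : Finset β :=
  {x ∈ S | ReachableIn r S x a}

variable {r : β → β → Prop} {S P T : Finset β} {x z a : β}

theorem mem_componentIn : x ∈ componentIn r S a ↔ x ∈ S ∧ ReachableIn r S x a := by
  classical
  simp [componentIn]

theorem ReachableIn.restrict (hP : ∀ y ∈ P, y ≠ z → ∀ y' ∈ S, r y y' → y' ∈ P)
    (h : ReachableIn r S x z) (hx : x ∈ P) : ReachableIn r P x z := by
  induction h using Relation.ReflTransGen.head_induction_on with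
  | refl => exact .refl
  | @head y y' hstep _ ih =>
    by_cases hyz : y = z
    · subst hyz
      exact .refl
    have hy' := hP y hx hyz y' hstep.2.1 hstep.2.2
    exact .head ⟨hx, hy', hstep.2.2⟩ (ih hy')

variable [Std.Symm r]

theorem ReachableIn.symm (h : ReachableIn r S x z) : ReachableIn r S z x :=
  have : Std.Symm fun x y => x ∈ S ∧ y ∈ S ∧ r x y :=
    ⟨fun _ _ h => ⟨h.2.1, h.1, _root_.symm h.2.2⟩⟩
  _root_.symm (r := Relation.ReflTransGen _) h

theorem connectedIn_of_forall_reachableIn (h : ∀ x ∈ P, ReachableIn r P x z) :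
    ConnectedIn r P :=
  fun x hx y hy => (h x hx).trans (h y hy).symm

theorem connectedIn_componentIn : ConnectedIn r (componentIn r S a) := by
  refine connectedIn_of_forall_reachableIn (z := a) fun x hx => ?_
  refine ReachableIn.restrict (fun y hy _ y' hy' hyy' => ?_) (mem_componentIn.1 hx).2 hx
  exact mem_componentIn.2 ⟨hy', .head ⟨hy', (mem_componentIn.1 hy).1, symm hyy'⟩
    (mem_componentIn.1 hy).2⟩

theorem ConnectedIn.sdiff_componentIn [DecidableEq β] (hT : ConnectedIn r T) (hz : z ∈ T) :
    ConnectedIn r (T \ componentIn r (T.erase z) a) := by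
  refine connectedIn_of_forall_reachableIn (z := z) fun x hx => ?_
  refine ReachableIn.restrict (fun y hy hyz y' hy' hyy' => ?_)
    (hT x (Finset.sdiff_subset hx) z hz) hx
  refine Finset.mem_sdiff.2 ⟨hy', fun hy'C => (Finset.mem_sdiff.1 hy).2 ?_⟩
  obtain ⟨hy'T, hy'a⟩ := mem_componentIn.1 hy'C
  have hyT : y ∈ T.erase z := Finset.mem_erase.2 ⟨hyz, (Finset.mem_sdiff.1 hy).1⟩
  exact mem_componentIn.2 ⟨hyT, .head ⟨hyT, hy'T, hyy'⟩ hy'a⟩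

end ConnectedFinset

section TightSets

variable {β : Type*} [DecidableEq β] {r : β → β → Prop} [Std.Symm r] {w : β → ℤ}

theorem linearCombination_indicator_one [Fintype β] (v : β → ℝ) (S : Finset β) :
    Fintype.linearCombination ℝ v ((S : Set β).indicator 1) = ∑ b ∈ S, v b := by
  simp [Fintype.linearCombination_apply, Set.indicator_apply]

theorem indicator_one_eq_sum_single (T : Finset β) :
    (T : Set β).indicator (1 : β → ℝ) = ∑ t ∈ T, Pi.single t 1 := by
  ext x
  simp [Set.indicator_apply, Finset.sum_apply, Pi.single_apply]

theorem exists_connectedIn_inter_eq_singleton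
    (hw : ∀ S, ConnectedIn r S → ∑ b ∈ S, w b ≤ 1) {T R : Finset β} (hT : ConnectedIn r T)
    (hTw : ∑ b ∈ T, w b = 1) (hTR : (T ∩ R).Nonempty) :
    ∃ v ∈ R, ∃ T' : Finset β, ConnectedIn r T' ∧ ∑ b ∈ T', w b = 1 ∧ T' ∩ R = {v} := by
  obtain ⟨z, hz⟩ := hTR
  obtain ⟨hzT, hzR⟩ := Finset.mem_inter.1 hz
  by_cases hsingle : T ∩ R ⊆ {z}
  · exact ⟨z, hzR, T, hT, hTw, Finset.Subset.antisymm hsingle (by simpa using hz)⟩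
  obtain ⟨a, ha, haz⟩ := Finset.not_subset.1 hsingle
  obtain ⟨haT, haR⟩ := Finset.mem_inter.1 ha
  have haz : a ≠ z := by simpa using haz
  set C := componentIn r (T.erase z) a
  have hCT : C ⊆ T.erase z := fun x hx => (mem_componentIn.1 hx).1
  have haC : a ∈ C := mem_componentIn.2 ⟨Finset.mem_erase.2 ⟨haz, haT⟩, .refl⟩
  by_cases hCw : 1 ≤ ∑ b ∈ C, w b
  · have hlt : (C ∩ R).card < (T ∩ R).card := by
      refine Finset.card_lt_card (Finset.ssubset_iff_of_subset ?_ |>.2 ⟨z, hz, ?_⟩)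
      · exact Finset.inter_subset_inter_right (hCT.trans (Finset.erase_subset _ _))
      · exact fun h => Finset.notMem_erase z T (hCT (Finset.mem_inter.1 h).1)
    exact exists_connectedIn_inter_eq_singleton hw connectedIn_componentIn
      (le_antisymm (hw _ connectedIn_componentIn) hCw) ⟨a, Finset.mem_inter.2 ⟨haC, haR⟩⟩
  · have hsplit := Finset.sum_sdiff (f := w) (hCT.trans (Finset.erase_subset z T))
    have hlt : ((T \ C) ∩ R).card < (T ∩ R).card := by
      refine Finset.card_lt_card (Finset.ssubset_iff_of_subset ?_ |>.2 ⟨a, ha, ?_⟩)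
      · exact Finset.inter_subset_inter_right Finset.sdiff_subset
      · exact fun h => (Finset.mem_sdiff.1 (Finset.mem_inter.1 h).1).2 haC
    have hzC : z ∉ C := fun h => Finset.notMem_erase z T (hCT h)
    have hTC : ConnectedIn r (T \ C) := hT.sdiff_componentIn hzT
    have hTCw : ∑ b ∈ T \ C, w b = 1 := le_antisymm (hw _ hTC) (by omega)
    exact exists_connectedIn_inter_eq_singleton hw hTC hTCw
      ⟨z, Finset.mem_inter.2 ⟨Finset.mem_sdiff.2 ⟨hzT, hzC⟩, hzR⟩⟩
termination_by (T ∩ R).card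

theorem eq_top_of_indicator_mem [Fintype β] (hw : ∀ S, ConnectedIn r S → ∑ b ∈ S, w b ≤ 1)
    (huniv : ConnectedIn r Finset.univ) (hunivw : ∑ b, w b = 1) {W : Submodule ℝ (β → ℝ)}
    (hW : ∀ T, ConnectedIn r T → ∑ b ∈ T, w b = 1 → (T : Set β).indicator 1 ∈ W) :
    W = ⊤ := by
  suffices key : ∀ R : Finset β, (∀ u ∉ R, Pi.single u (1 : ℝ) ∈ W) →
      ∀ u, Pi.single u (1 : ℝ) ∈ W by
    rw [eq_top_iff, ← (Pi.basisFun ℝ β).span_eq, Submodule.span_le]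
    rintro _ ⟨u, rfl⟩
    simpa using key Finset.univ (by simp) u
  intro R
  induction R using Finset.strongInduction with
  | H R ih =>
  intro hR
  rcases R.eq_empty_or_nonempty with rfl | hRne
  · simpa using hR
  obtain ⟨v, hvR, T, hT, hTw, hTR⟩ :=
    exists_connectedIn_inter_eq_singleton hw huniv hunivw (by simpa using hRne)
  refine ih _ (Finset.erase_ssubset hvR) fun u hu => ?_
  by_cases huv : u = v
  · subst huv
    have huT : u ∈ T := (Finset.mem_inter.1 (hTR ▸ Finset.mem_singleton_self u)).1
    have hsingle : Pi.single u (1 : ℝ) =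
        (T : Set β).indicator 1 - ∑ t ∈ T.erase u, Pi.single t (1 : ℝ) := by
      rw [indicator_one_eq_sum_single, ← Finset.add_sum_erase T _ huT, add_sub_cancel_right]
    rw [hsingle]
    refine W.sub_mem (hW T hT hTw) (W.sum_mem fun t ht => hR t fun htR => ?_)
    have : t ∈ T ∩ R := Finset.mem_inter.2 ⟨Finset.mem_of_mem_erase ht, htR⟩
    rw [hTR, Finset.mem_singleton] at this
    exact Finset.ne_of_mem_erase ht this
  · exact hR u fun huR => hu (Finset.mem_erase.2 ⟨huv, huR⟩)

end TightSets

end ConnectedBlocksPaper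

namespace SimpleGraph

variable {V : Type*} {G : SimpleGraph V}

namespace Walk

theorem IsCycle.three_le_ncard_verts_toSubgraph {u : V} {c : G.Walk u u} (hc : c.IsCycle) :
    3 ≤ c.toSubgraph.verts.ncard := by
  classical
  have hverts : c.toSubgraph.verts = (c.support.tail.toFinset : Set V) := by
    ext w
    rw [mem_verts_toSubgraph, List.coe_toFinset, Set.mem_ofPred_eq, ← c.cons_tail_support,
      List.mem_cons]
    exact ⟨fun h => h.elim (· ▸ c.end_mem_tail_support hc.not_nil) id, Or.inr⟩
  rw [hverts, Set.ncard_coe_finset, List.toFinset_card_of_nodup hc.support_nodup,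
    List.length_tail, length_support, Nat.add_sub_cancel]
  exact hc.three_le_length

theorem IsCycle.connected_deleteVerts_start {u : V} {c : G.Walk u u} (hc : c.IsCycle) :
    (c.toSubgraph.deleteVerts {u}).Connected := by
  cases c with
  | nil => exact absurd rfl hc.ne_nil
  | @cons _ y _ huy q =>
    have hq : q.IsPath := ((cons_isCycle_iff q huy).1 hc).1
    have hqnil : ¬q.Nil := fun h => huy.ne (h.eq).symm
    -- removing the base point of the cycle `cons huy q` leaves the path `q.dropLast`
    set p := q.dropLast
    have hsupp : q.support = p.support ++ [u] := by
      rw [support_dropLast hqnil, dropLast_support_concat]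
    have hup : u ∉ p.support := by
      have := hq.support_nodup
      rw [hsupp, List.nodup_append] at this
      exact fun h => this.2.2 u h u (List.mem_singleton_self u) rfl
    have hverts : p.toSubgraph.verts = (((cons huy q).toSubgraph).deleteVerts {u}).verts := by
      ext w
      simp only [Subgraph.deleteVerts_verts, Set.mem_sdiff, mem_verts_toSubgraph,
        Set.mem_singleton_iff, support_cons, List.mem_cons, hsupp, List.mem_append]
      constructor
      · exact fun hw => ⟨Or.inr (Or.inl hw), fun h => hup (h ▸ hw)⟩
      · rintro ⟨(h | h | h), hwu⟩ <;> simp_all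
    refine p.toSubgraph_connected.mono ⟨hverts.le, fun a b hab => ?_⟩ hverts
    have ha := p.mem_support_of_adj_toSubgraph hab
    have hb := p.mem_support_of_adj_toSubgraph hab.symm
    have hadj : (cons huy q).toSubgraph.Adj a b := by
      rw [adj_toSubgraph_iff_mem_edges, edges_dropLast] at hab
      rw [adj_toSubgraph_iff_mem_edges, edges_cons]
      exact List.mem_cons_of_mem _ (List.dropLast_subset _ hab)
    exact Subgraph.deleteVerts_adj.2
      ⟨hadj.fst_mem, fun h => hup (Set.mem_singleton_iff.1 h ▸ ha),
        hadj.snd_mem, fun h => hup (Set.mem_singleton_iff.1 h ▸ hb), hadj⟩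

theorem IsCycle.connected_deleteVerts [DecidableEq V] {u x : V} {c : G.Walk u u}
    (hc : c.IsCycle) (hx : x ∈ c.toSubgraph.verts) :
    (c.toSubgraph.deleteVerts {x}).Connected := by
  rw [mem_verts_toSubgraph] at hx
  rw [← c.toSubgraph_rotate hx]
  exact (hc.rotate hx).connected_deleteVerts_start

end Walk

theorem Subgraph.Connected.coe_reachable_of_le {H K : G.Subgraph} (hH : H.Connected)
    (hle : H ≤ K) {u v : V} (hu : u ∈ H.verts) (hv : v ∈ H.verts) :
    K.coe.Reachable ⟨u, hle.1 hu⟩ ⟨v, hle.1 hv⟩ :=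
  (hH ⟨u, hu⟩ ⟨v, hv⟩).map (Subgraph.inclusion hle)

end SimpleGraph

namespace ConnectedBlocksPaper

open SimpleGraph

section Blocks

variable {V : Type} {G : SimpleGraph V}

theorem isTwoConnectedSub_of_isCycle {u : V} {c : G.Walk u u} (hc : c.IsCycle) :
    IsTwoConnectedSub G c.toSubgraph := by
  classical
  exact ⟨hc.three_le_ncard_verts_toSubgraph, fun _ hx => hc.connected_deleteVerts hx⟩

theorem Block.connected (B : Block G) : (B : G.Subgraph).Connected := by
  obtain ⟨H, ⟨h2, -⟩ | ⟨u, v, huv, -, rfl⟩⟩ := B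
  · exact h2.connected
  · exact Subgraph.subgraphOfAdj_connected huv

theorem exists_block_adj [Finite V] {u v : V} (huv : G.Adj u v) :
    ∃ B : Block G, (B : G.Subgraph).Adj u v := by
  by_cases hbridge : G.IsBridge s(u, v)
  · exact ⟨⟨G.subgraphOfAdj huv, Or.inr ⟨u, v, huv, hbridge, rfl⟩⟩, by simp⟩
  obtain ⟨x, c, hc, huvc⟩ : ∃ (x : V) (c : G.Walk x x), c.IsCycle ∧ s(u, v) ∈ c.edges := by
    simpa [isBridge_iff_forall_cycle_notMem (G.mem_edgeSet.2 huv)] using hbridge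
  obtain ⟨M, hcM, hM⟩ := Finite.exists_le_maximal (isTwoConnectedSub_of_isCycle hc)
  exact ⟨⟨M, Or.inl ⟨hM.1, fun B hB hMB => le_antisymm (hM.2 hB hMB) hMB⟩⟩,
    hcM.2 (c.adj_toSubgraph_iff_mem_edges.2 huvc)⟩

def blocksMeet (G : SimpleGraph V) (B B' : Block G) : Prop :=
  ((B : G.Subgraph).verts ∩ (B' : G.Subgraph).verts).Nonempty

instance : Std.Symm (blocksMeet G) := ⟨fun _ _ h => by rwa [blocksMeet, inter_comm]⟩

theorem reachableIn_univ_of_walk [Finite V] [Fintype (Block G)] {a b : V} (p : G.Walk a b)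
    {B B' : Block G} (ha : a ∈ (B : G.Subgraph).verts) (hb : b ∈ (B' : G.Subgraph).verts) :
    ReachableIn (blocksMeet G) Finset.univ B B' := by
  induction p generalizing B with
  | nil => exact .single ⟨Finset.mem_univ _, Finset.mem_univ _, _, ha, hb⟩
  | cons hadj _ ih =>
    obtain ⟨B₁, hB₁⟩ := exists_block_adj hadj
    exact .head ⟨Finset.mem_univ _, Finset.mem_univ _, _, ha, hB₁.fst_mem⟩ (ih hB₁.snd_mem hb)

theorem connectedIn_univ [Finite V] [Fintype (Block G)] (hG : G.Connected) :
    ConnectedIn (blocksMeet G) Finset.univ := fun B _ B' _ => by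
  obtain ⟨a, ha⟩ := B.connected.nonempty
  obtain ⟨b, hb⟩ := B'.connected.nonempty
  exact reachableIn_univ_of_walk (hG.preconnected a b).some ha hb

theorem le_blockUnion {𝓐 : Set (Block G)} {B : Block G} (hB : B ∈ 𝓐) :
    (B : G.Subgraph) ≤ blockUnion G 𝓐 :=
  le_iSup₂ (f := fun (B : Block G) (_ : B ∈ 𝓐) => (B : G.Subgraph)) B hB

theorem mem_blockUnion_verts {𝓐 : Set (Block G)} {v : V} :
    v ∈ (blockUnion G 𝓐).verts ↔ ∃ B ∈ 𝓐, v ∈ (B : G.Subgraph).verts := by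
  simp [blockUnion]

theorem reachable_blockUnion {S : Finset (Block G)} {B B' : Block G}
    (h : ReachableIn (blocksMeet G) S B B') (hB : B ∈ S) (hB' : B' ∈ S) {a b : V}
    (ha : a ∈ (B : G.Subgraph).verts) (hb : b ∈ (B' : G.Subgraph).verts) :
    (blockUnion G S).coe.Reachable ⟨a, (le_blockUnion hB).1 ha⟩
      ⟨b, (le_blockUnion hB').1 hb⟩ := by
  induction h using Relation.ReflTransGen.head_induction_on generalizing a with
  | refl => exact B'.connected.coe_reachable_of_le (le_blockUnion hB') ha hb
  | head hstep _ ih =>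
    obtain ⟨hX, hY, c, hcX, hcY⟩ := hstep
    exact ((Block.connected _).coe_reachable_of_le (le_blockUnion hX) ha hcX).trans
      (ih hY hcY)

theorem connBlocks_of_connectedIn {S : Finset (Block G)}
    (hS : ConnectedIn (blocksMeet G) S) : ConnBlocks G S := by
  rcases S.eq_empty_or_nonempty with rfl | ⟨B₀, hB₀⟩
  · exact Or.inl Finset.coe_empty
  refine Or.inr (Subgraph.connected_iff.2 ⟨Subgraph.preconnected_iff.2 ?_, ?_⟩)
  · rintro ⟨a, ha⟩ ⟨b, hb⟩
    obtain ⟨B, hB, ha⟩ := mem_blockUnion_verts.1 ha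
    obtain ⟨B', hB', hb⟩ := mem_blockUnion_verts.1 hb
    exact reachable_blockUnion (hS B hB B' hB') hB hB' ha hb
  · obtain ⟨a, ha⟩ := B₀.connected.nonempty
    exact ⟨a, (le_blockUnion (Finset.mem_coe.2 hB₀)).1 ha⟩

end Blocks

section IndependentBlocksInequality

variable {V : Type} {G : SimpleGraph V} {𝓘 : Set (Block G)} {α : Block G → ℤ}

theorem blockClosure_subset {𝓐 𝓒 : Set (Block G)} (h𝓐 : 𝓐 ⊆ 𝓒) (h𝓒 : ConnBlocks G 𝓒) :
    blockClosure G 𝓐 ⊆ 𝓒 :=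
  sInter_subset_of_mem ⟨h𝓐, h𝓒⟩

theorem IsIBI.nonpos_of_notMem (h : IsIBI G 𝓘 α) {B : Block G} (hB : B ∉ 𝓘) : α B ≤ 0 := by
  by_cases hcl : B ∈ blockClosure G 𝓘
  · exact h.2.2.2.1 B ⟨hcl, hB⟩
  · exact (h.2.1 B hcl).le

theorem IsIBI.sum_univ [Fintype (Block G)] (h : IsIBI G 𝓘 α) : ∑ B, α B = 1 := by
  classical
  obtain ⟨-, hzero, hone, -, hsum, -⟩ := h
  have hin : ∑ B with B ∈ 𝓘, α B = 𝓘.ncard := by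
    rw [Finset.sum_congr rfl fun B hB => hone B (Finset.mem_filter.1 hB).2]
    simp [ncard_eq_toFinset_card']
  have hout : ∑ B with B ∉ 𝓘, α B = ∑ B ∈ (blockClosure G 𝓘 \ 𝓘).toFinset, α B := by
    refine (Finset.sum_subset (fun B hB => ?_) fun B _ hB => hzero B ?_).symm <;> simp_all
  rw [finsum_mem_eq_toFinset_sum] at hsum
  rw [← Finset.sum_filter_add_sum_filter_not Finset.univ (· ∈ 𝓘)]
  omega

theorem IsIBI.sum_le_one [Fintype (Block G)] (h : IsIBI G 𝓘 α) {S : Finset (Block G)}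
    (hS : ConnBlocks G S) : ∑ B ∈ S, α B ≤ 1 := by
  classical
  set I := {B ∈ S | B ∈ 𝓘} with hIdef
  have hI : (I : Set (Block G)) ⊆ 𝓘 := fun B hB => (Finset.mem_filter.1 hB).2
  have hIS : blockClosure G I ⊆ S :=
    blockClosure_subset (fun B hB => (Finset.mem_filter.1 hB).1) hS
  have hin : ∑ B ∈ I, α B = I.card := by
    rw [Finset.sum_congr rfl fun B hB => h.2.2.1 B (Finset.mem_filter.1 hB).2, Finset.sum_const,
      nsmul_one]
  have hout : ∑ B ∈ S with B ∉ 𝓘, α B ≤ ∑ B ∈ (blockClosure G I \ 𝓘).toFinset, α B := by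
    refine Finset.sum_le_sum_of_subset_of_nonpos' (fun B hB => ?_) fun B hB _ => ?_
    · simp only [toFinset_sdiff, Finset.mem_sdiff, mem_toFinset] at hB
      exact Finset.mem_filter.2 ⟨hIS hB.1, hB.2⟩
    · exact h.nonpos_of_notMem (Finset.mem_filter.1 hB).2
  have hcond := h.2.2.2.2.2 I hI
  rw [finsum_mem_eq_toFinset_sum, ncard_coe_finset] at hcond
  rw [← Finset.sum_filter_add_sum_filter_not S (fun B => B ∈ 𝓘), ← hIdef]
  omega

theorem IsIBI.linearCombination_le_one [Fintype (Block G)] (h : IsIBI G 𝓘 α) :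
    ∀ x ∈ CBP G, Fintype.linearCombination ℝ (fun B => (α B : ℝ)) x ≤ 1 := by
  classical
  refine fun x hx => convexHull_min ?_
    (convex_halfSpace_le (Fintype.linearCombination ℝ fun B => (α B : ℝ)).isLinear 1) hx
  rintro _ ⟨𝓐, h𝓐, rfl⟩
  rw [← 𝓐.coe_toFinset] at h𝓐 ⊢
  rw [mem_ofPred_eq, incVec, linearCombination_indicator_one]
  exact_mod_cast h.sum_le_one h𝓐

end IndependentBlocksInequality

variable {V : Type} [Fintype V] [DecidableEq V]

/-- every independent blocks inequality defines a facet of `CBP(G)`. -/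
theorem ibi_facet (G : SimpleGraph V) (hG : G.Connected)
    (𝓘 : Set (Block G)) (α : Block G → ℤ) (h : IsIBI G 𝓘 α) :
    IsFaceOf (CBP G) {x ∈ CBP G | ∑ᶠ B : Block G, (α B : ℝ) * x B = 1} ∧
      polyDim {x ∈ CBP G | ∑ᶠ B : Block G, (α B : ℝ) * x B = 1} =
        Nat.card (Block G) - 1 := by
  classical
  have : Fintype (Block G) := Fintype.ofFinite _
  set f := Fintype.linearCombination ℝ fun B => (α B : ℝ)
  have hf : ∀ x : Block G → ℝ, ∑ᶠ B, (α B : ℝ) * x B = f x := fun x => by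
    simp [f, Fintype.linearCombination_apply, finsum_eq_sum_of_fintype, mul_comm]
  simp_rw [hf]
  refine ⟨isFaceOf_setOf_eq_one (convex_convexHull ℝ _) f h.linearCombination_le_one, ?_⟩
  rw [polyDim_eq_finrank_sub_one f (fun x hx => hx.2), Module.finrank_fintype_fun_eq_card,
    Nat.card_eq_fintype_card]
  refine eq_top_of_indicator_mem (fun S hS => h.sum_le_one (connBlocks_of_connectedIn hS))
    (connectedIn_univ hG) h.sum_univ fun T hT hTw => Submodule.subset_span
      ⟨subset_convexHull ℝ _ ⟨T, connBlocks_of_connectedIn hT, rfl⟩, ?_⟩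
  rw [linearCombination_indicator_one]
  exact_mod_cast hTw

end ConnectedBlocksPaper
end
end
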